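/- arXiv:1404.6239 — 3 statements merged into one kernel-verified Lean document; each statement's English description precedes it below -/
import Mathlib

section
/- Let n be an odd positive integer. Define a permutation a of Z/nZ by a(0) = 0 and, for odd i with 1 ≤ i ≤ n−2, a swaps i and i+1; and let b be the n-cycle b(i) = i+1 mod n. Then the commutator c = a⁻¹ b⁻¹ a b, as a permutation of Z/nZ, has order n; equivalently, the smallest positive integer k with cᵏ(0) = 0 is k = n. -/
/-!
For odd `n`, `zigzag` evaluated at `0, 2, 4, …` runs through `ℤ/n` in the cyclic order
`0, 2, 4, …, n - 1, n - 2, …, 3, 1`. Read in this order, `a` is the reflection `y ↦ -y` and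
`b⁻¹ a b` is the reflection `y ↦ -2 - y`. As `a` is an involution, the commutator is the product
of these two reflections, the rotation `y ↦ y + 2`, which is an `n`-cycle because `n` is odd.
-/

lemma ZMod.val_add_one_of_lt {n : ℕ} [NeZero n] {x : ZMod n} (h : x.val + 1 < n) :
    (x + 1).val = x.val + 1 := by
  have hx : x + 1 = ((x.val + 1 : ℕ) : ZMod n) := by push_cast; rw [ZMod.natCast_zmod_val]
  rw [hx, ZMod.val_natCast_of_lt h]

lemma ZMod.val_neg_one_sub {n : ℕ} [NeZero n] (x : ZMod n) : (-1 - x).val = n - 1 - x.val := by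
  have hlt := x.val_lt
  have hx : -1 - x = ((n - 1 - x.val : ℕ) : ZMod n) := by
    rw [Nat.cast_sub (by omega), Nat.cast_sub (by omega), ZMod.natCast_self,
      ZMod.natCast_zmod_val]
    ring
  rw [hx, ZMod.val_natCast_of_lt (by omega)]

section

variable {n : ℕ}

def zigzag (y : ZMod n) : ZMod n := if Even y.val then y else -1 - y

lemma zigzag_of_even {y : ZMod n} (hy : Even y.val) : zigzag y = y := if_pos hy

lemma zigzag_of_odd {y : ZMod n} (hy : ¬ Even y.val) : zigzag y = -1 - y := if_neg hy

lemma zigzag_zero : zigzag (0 : ZMod n) = 0 := zigzag_of_even (by simp)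

lemma zigzag_involutive [NeZero n] (hn : Odd n) :
    Function.Involutive (zigzag : ZMod n → ZMod n) := by
  intro y
  by_cases hy : Even y.val
  · rw [zigzag_of_even hy, zigzag_of_even hy]
  · have hy' : ¬ Even (-1 - y).val := by
      have := y.val_lt
      simp only [ZMod.val_neg_one_sub, Nat.even_iff, Nat.odd_iff] at hy hn ⊢
      omega
    rw [zigzag_of_odd hy, zigzag_of_odd hy', sub_sub_cancel]

def IsPairSwap (a : ZMod n → ZMod n) : Prop :=
  a 0 = 0 ∧ ∀ x, x ≠ 0 → a x = if Odd x.val then x + 1 else x - 1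

namespace IsPairSwap

variable {a : ZMod n → ZMod n}

lemma apply_of_odd (ha : IsPairSwap a) {x : ZMod n} (hx : ¬ Even x.val) : a x = x + 1 := by
  have hx0 : x ≠ 0 := by rintro rfl; simp at hx
  rw [ha.2 x hx0, if_pos (Nat.not_even_iff_odd.mp hx)]

lemma apply_of_even (ha : IsPairSwap a) {x : ZMod n} (hx : Even x.val) (hx0 : x ≠ 0) :
    a x = x - 1 := by
  rw [ha.2 x hx0, if_neg (Nat.not_odd_iff_even.mpr hx)]

variable [NeZero n]

lemma apply_zigzag (ha : IsPairSwap a) (hn : Odd n) (y : ZMod n) :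
    a (zigzag y) = zigzag (-y) := by
  by_cases hy0 : y = 0
  · rw [hy0, neg_zero, zigzag_zero, ha.1]
  have hneg : (-y).val = n - y.val := by rw [ZMod.neg_val, if_neg hy0]
  have := y.val_lt
  by_cases hy : Even y.val
  · have hny : ¬ Even (-y).val := by
      simp only [hneg, Nat.even_iff, Nat.odd_iff] at hy hn ⊢; omega
    rw [zigzag_of_even hy, zigzag_of_odd hny, ha.apply_of_even hy hy0]
    ring
  · have hny : Even (-y).val := by
      simp only [hneg, Nat.even_iff, Nat.odd_iff] at hy hn ⊢; omega
    have hz : ¬ Even (-1 - y).val := by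
      simp only [ZMod.val_neg_one_sub, Nat.even_iff, Nat.odd_iff] at hy hn ⊢; omega
    rw [zigzag_of_odd hy, zigzag_of_even hny, ha.apply_of_odd hz]
    ring

lemma apply_zigzag_add_one (ha : IsPairSwap a) (hn : Odd n) (y : ZMod n) :
    a (zigzag y + 1) - 1 = zigzag (-2 - y) := by
  have := y.val_lt
  have h2 : -2 - y = -1 - (y + 1) := by ring
  by_cases hy : Even y.val
  · rw [zigzag_of_even hy]
    rcases (by omega : y.val + 1 = n ∨ y.val + 1 < n) with hlast | hlt
    · have hy1 : y + 1 = 0 := by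
        rw [← ZMod.natCast_zmod_val y, ← Nat.cast_add_one, hlast, ZMod.natCast_self]
      have hz : Even ((-1 : ZMod n) - 0).val := by
        simp only [ZMod.val_neg_one_sub, ZMod.val_zero, Nat.even_iff, Nat.odd_iff] at hn ⊢
        omega
      rw [h2, hy1, ha.1, zigzag_of_even hz]
      ring
    · have hy1 := ZMod.val_add_one_of_lt hlt
      have ho : ¬ Even (y + 1).val := by
        simp only [hy1, Nat.even_iff] at hy ⊢; omega
      have hz : ¬ Even (-1 - (y + 1)).val := by
        simp only [ZMod.val_neg_one_sub, hy1, Nat.even_iff, Nat.odd_iff] at hy hn ⊢; omega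
      rw [ha.apply_of_odd ho, h2, zigzag_of_odd hz]
      ring
  · have hy0 : y ≠ 0 := by rintro rfl; simp at hy
    have hneg : (-y).val = n - y.val := by rw [ZMod.neg_val, if_neg hy0]
    have hlt : y.val + 1 < n := by
      simp only [Nat.even_iff, Nat.odd_iff] at hy hn; omega
    have he : Even (-y).val := by
      simp only [hneg, Nat.even_iff, Nat.odd_iff] at hy hn ⊢; omega
    have hz : Even (-1 - (y + 1)).val := by
      simp only [ZMod.val_neg_one_sub, ZMod.val_add_one_of_lt hlt, Nat.even_iff,
        Nat.odd_iff] at hy hn ⊢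
      omega
    rw [zigzag_of_odd hy, show -1 - y + 1 = -y by ring,
      ha.apply_of_even he (neg_ne_zero.mpr hy0), h2, zigzag_of_even hz]
    ring

lemma involutive (ha : IsPairSwap a) (hn : Odd n) : Function.Involutive a := by
  intro x
  obtain ⟨y, rfl⟩ := (zigzag_involutive hn).surjective x
  rw [ha.apply_zigzag hn, ha.apply_zigzag hn, neg_neg]

end IsPairSwap

end

lemma ZMod.nsmul_two_eq_zero_iff {n : ℕ} (hn : Odd n) (k : ℕ) : k • (2 : ZMod n) = 0 ↔ n ∣ k := by
  rw [nsmul_eq_mul, ← Nat.cast_ofNat, ← Nat.cast_mul, ZMod.natCast_eq_zero_iff,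
    Nat.Coprime.dvd_mul_right (Nat.coprime_two_right.mpr hn)]

section

variable {n : ℕ} [NeZero n] {a b : Equiv.Perm (ZMod n)}

lemma commutator_apply_zigzag (ha : IsPairSwap a) (hb : ∀ x, b x = x + 1) (hn : Odd n)
    (y : ZMod n) : (a⁻¹ * b⁻¹ * a * b) (zigzag y) = zigzag (y + 2) := by
  have ha_inv (x : ZMod n) : a⁻¹ x = a x := by
    rw [Equiv.Perm.inv_eq_iff_eq, ha.involutive hn]
  have hb_inv (x : ZMod n) : b⁻¹ x = x - 1 := by
    rw [Equiv.Perm.inv_eq_iff_eq, hb, sub_add_cancel]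
  simp only [Equiv.Perm.mul_apply, hb, hb_inv, ha_inv]
  rw [ha.apply_zigzag_add_one hn, ha.apply_zigzag hn]
  congr 1
  ring

lemma commutator_pow_apply_zigzag (ha : IsPairSwap a) (hb : ∀ x, b x = x + 1) (hn : Odd n)
    (k : ℕ) (y : ZMod n) : ((a⁻¹ * b⁻¹ * a * b) ^ k) (zigzag y) = zigzag (y + k • 2) := by
  have hsemiconj : Function.Semiconj zigzag (· + 2) ⇑(a⁻¹ * b⁻¹ * a * b) :=
    fun y => (commutator_apply_zigzag ha hb hn y).symm
  rw [Equiv.Perm.coe_pow, ← hsemiconj.iterate_right k y, add_right_iterate]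

end

theorem stmt_3_general (n : ℕ) (hodd : Odd n)
    (a b : Equiv.Perm (ZMod n))
    (ha0 : a 0 = 0)
    (ha : ∀ x : ZMod n, x ≠ 0 → a x = if Odd x.val then x + 1 else x - 1)
    (hb : ∀ x : ZMod n, b x = x + 1) :
    IsLeast {k : ℕ | 0 < k ∧ ((a⁻¹ * b⁻¹ * a * b) ^ k) 0 = 0} n ∧
      orderOf (a⁻¹ * b⁻¹ * a * b) = n := by
  have : NeZero n := ⟨hodd.pos.ne'⟩
  set c := a⁻¹ * b⁻¹ * a * b
  have hc : ∀ k y, (c ^ k) (zigzag y) = zigzag (y + k • 2) :=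
    commutator_pow_apply_zigzag ⟨ha0, ha⟩ hb hodd
  have hzigzag := zigzag_involutive hodd
  have hfix (k : ℕ) : (c ^ k) 0 = 0 ↔ n ∣ k := by
    have h0 := hc k 0
    rw [zigzag_zero, zero_add] at h0
    rw [h0, hzigzag.injective.eq_iff' zigzag_zero, ZMod.nsmul_two_eq_zero_iff hodd]
  have hpow (k : ℕ) : c ^ k = 1 ↔ n ∣ k := by
    refine ⟨fun h => (hfix k).mp (by rw [h, Equiv.Perm.one_apply]), fun h => Equiv.ext fun x => ?_⟩
    obtain ⟨y, rfl⟩ := hzigzag.surjective x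
    rw [hc, (ZMod.nsmul_two_eq_zero_iff hodd k).mpr h, add_zero, Equiv.Perm.one_apply]
  refine ⟨⟨⟨hodd.pos, (hfix n).mpr dvd_rfl⟩, fun k hk => Nat.le_of_dvd hk.1 ((hfix k).mp hk.2)⟩, ?_⟩
  exact Nat.dvd_antisymm (orderOf_dvd_of_pow_eq_one ((hpow n).mpr dvd_rfl))
    ((hpow _).mp (pow_orderOf_eq_one c))

/-- Let `n` be odd, `a` the permutation of `ℤ/nℤ` fixing `0` and swapping `i ↔ i+1`
for odd `1 ≤ i ≤ n−2`, and `b : i ↦ i+1`. Then the commutator `c = a⁻¹b⁻¹ab` has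
order `n`; equivalently the least positive `k` with `cᵏ(0) = 0` is `n`. -/
theorem stmt_3 (n : ℕ) (hpos : 0 < n) (hodd : Odd n)
    (a b : Equiv.Perm (ZMod n))
    (ha0 : a 0 = 0)
    (ha : ∀ x : ZMod n, x ≠ 0 → a x = if Odd x.val then x + 1 else x - 1)
    (hb : ∀ x : ZMod n, b x = x + 1) :
    IsLeast {k : ℕ | 0 < k ∧ ((a⁻¹ * b⁻¹ * a * b) ^ k) 0 = 0} n ∧
      orderOf (a⁻¹ * b⁻¹ * a * b) = n :=
  stmt_3_general n hodd a b ha0 ha hb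
end

section
/- Suppose X and Y are geodesic metric spaces, X = ⋃_{i∈I} V_i and Y = ⋃_{i∈I} W_i are decompositions into closed subsets, Φ : X → Y is a bijection with Φ(V_i) = W_i, the restriction of Φ to each V_i is K-bilipschitz onto W_i, and every pair of points in X (resp. Y) is joined by a geodesic that decomposes into finitely many subsegments each contained in some V_i (resp. W_i). Then Φ is a K-bilipschitz equivalence from X to Y. -/
/-!
Summing the bilipschitz bounds along a tiled geodesic: if `x = p₀, …, pₘ = x'` lie on a geodesic
with consecutive points in a common tile, the triangle inequality gives
`d(Φx, Φx') ≤ ∑ d(Φpⱼ, Φpⱼ₊₁) ≤ K ∑ d(pⱼ, pⱼ₊₁) = K d(x, x')`.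
The lower bound is the same argument for `Φ⁻¹`, using tiled geodesics in `Y`.
-/

open Finset

section TiledChain

variable {α β ι : Type*} [PseudoMetricSpace α] [PseudoMetricSpace β]

theorem dist_comp_le_mul_sum_of_chain (f : α → β) (C : ℝ) (S : ι → Set α)
    (hf : ∀ i, ∀ a ∈ S i, ∀ b ∈ S i, dist (f a) (f b) ≤ C * dist a b)
    {m : ℕ} {p : ℕ → α} (hp : ∀ j < m, ∃ i, p j ∈ S i ∧ p (j + 1) ∈ S i) :
    dist (f (p 0)) (f (p m)) ≤ C * ∑ j ∈ range m, dist (p j) (p (j + 1)) :=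
  calc dist (f (p 0)) (f (p m))
      ≤ ∑ j ∈ range m, dist (f (p j)) (f (p (j + 1))) := dist_le_range_sum_dist (f ∘ p) m
    _ ≤ ∑ j ∈ range m, C * dist (p j) (p (j + 1)) := by
        refine sum_le_sum fun j hj => ?_
        obtain ⟨i, hj, hj'⟩ := hp j (mem_range.mp hj)
        exact hf i _ hj _ hj'
    _ = C * ∑ j ∈ range m, dist (p j) (p (j + 1)) := (mul_sum ..).symm

theorem dist_le_mul_of_forall_tiled_geodesic (f : α → β) (C : ℝ) (S : ι → Set α)
    (hf : ∀ i, ∀ a ∈ S i, ∀ b ∈ S i, dist (f a) (f b) ≤ C * dist a b)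
    (hchain : ∀ a b : α, ∃ (m : ℕ) (p : ℕ → α), p 0 = a ∧ p m = b ∧
      (∀ j < m, ∃ i, p j ∈ S i ∧ p (j + 1) ∈ S i) ∧
      (∑ j ∈ range m, dist (p j) (p (j + 1))) = dist a b)
    (a b : α) : dist (f a) (f b) ≤ C * dist a b := by
  obtain ⟨m, p, rfl, rfl, hp, hsum⟩ := hchain a b
  rw [← hsum]
  exact dist_comp_le_mul_sum_of_chain f C S hf hp

theorem Equiv.dist_symm_le_of_image_eq (e : α ≃ β) {K : ℝ} (hK : 0 < K) {S : Set α}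
    {T : Set β} (hST : e '' S = T)
    (he : ∀ a ∈ S, ∀ b ∈ S, (1 / K) * dist a b ≤ dist (e a) (e b)) :
    ∀ c ∈ T, ∀ d ∈ T, dist (e.symm c) (e.symm d) ≤ K * dist c d := by
  rintro _ hc _ hd
  rw [← hST] at hc hd
  obtain ⟨a, ha, rfl⟩ := hc
  obtain ⟨b, hb, rfl⟩ := hd
  rw [e.symm_apply_apply, e.symm_apply_apply, ← div_le_iff₀' hK, ← one_div_mul_eq_div]
  exact he a ha b hb

end TiledChain

theorem stmt_5_general {X Y : Type*} [MetricSpace X] [MetricSpace Y] {ι : Type*}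
    (V : ι → Set X) (W : ι → Set Y) (K : ℝ)
    (Φ : X ≃ Y) (hΦ : ∀ i, Φ '' V i = W i)
    (hbl : ∀ i, ∀ x ∈ V i, ∀ x' ∈ V i,
      (1 / K) * dist x x' ≤ dist (Φ x) (Φ x') ∧ dist (Φ x) (Φ x') ≤ K * dist x x')
    (hchainX : ∀ x x' : X, ∃ (m : ℕ) (p : ℕ → X), p 0 = x ∧ p m = x' ∧
      (∀ j < m, ∃ i, p j ∈ V i ∧ p (j + 1) ∈ V i) ∧
      (∑ j ∈ Finset.range m, dist (p j) (p (j + 1))) = dist x x')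
    (hchainY : ∀ y y' : Y, ∃ (m : ℕ) (q : ℕ → Y), q 0 = y ∧ q m = y' ∧
      (∀ j < m, ∃ i, q j ∈ W i ∧ q (j + 1) ∈ W i) ∧
      (∑ j ∈ Finset.range m, dist (q j) (q (j + 1))) = dist y y') :
    ∀ x x' : X,
      (1 / K) * dist x x' ≤ dist (Φ x) (Φ x') ∧ dist (Φ x) (Φ x') ≤ K * dist x x' := by
  intro x x'
  refine ⟨?_, dist_le_mul_of_forall_tiled_geodesic Φ K V
    (fun i a ha b hb => (hbl i a ha b hb).2) hchainX x x'⟩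
  rcases le_or_gt K 0 with hK | hK
  · exact (mul_nonpos_of_nonpos_of_nonneg (one_div_nonpos.2 hK) dist_nonneg).trans dist_nonneg
  · have hsymm := dist_le_mul_of_forall_tiled_geodesic Φ.symm K W
      (fun i => Φ.dist_symm_le_of_image_eq hK (hΦ i) fun a ha b hb => (hbl i a ha b hb).1)
      hchainY (Φ x) (Φ x')
    rw [Φ.symm_apply_apply, Φ.symm_apply_apply] at hsymm
    rwa [one_div_mul_eq_div, div_le_iff₀' hK]

/-- Tilings lemma (Lemma 4.8): if `X = ⋃ Vᵢ`, `Y = ⋃ Wᵢ` are covers by closed sets,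
`Φ : X ≃ Y` maps `Vᵢ` onto `Wᵢ` and is `K`-bilipschitz on each `Vᵢ`, and all pairs of
points in `X` (resp. `Y`) are joined by geodesics decomposing into finitely many
subsegments each inside some `Vᵢ` (resp. `Wᵢ`), then `Φ` is `K`-bilipschitz on `X`. -/
theorem stmt_5 {X Y : Type*} [MetricSpace X] [MetricSpace Y] {ι : Type*}
    (V : ι → Set X) (W : ι → Set Y) (K : ℝ) (hK : 1 ≤ K)
    (hVclosed : ∀ i, IsClosed (V i)) (hWclosed : ∀ i, IsClosed (W i))
    (hVcover : ∀ x : X, ∃ i, x ∈ V i) (hWcover : ∀ y : Y, ∃ i, y ∈ W i)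
    (Φ : X ≃ Y) (hΦ : ∀ i, Φ '' V i = W i)
    (hbl : ∀ i, ∀ x ∈ V i, ∀ x' ∈ V i,
      (1 / K) * dist x x' ≤ dist (Φ x) (Φ x') ∧ dist (Φ x) (Φ x') ≤ K * dist x x')
    (hchainX : ∀ x x' : X, ∃ (m : ℕ) (p : ℕ → X), p 0 = x ∧ p m = x' ∧
      (∀ j < m, ∃ i, p j ∈ V i ∧ p (j + 1) ∈ V i) ∧
      (∑ j ∈ Finset.range m, dist (p j) (p (j + 1))) = dist x x')
    (hchainY : ∀ y y' : Y, ∃ (m : ℕ) (q : ℕ → Y), q 0 = y ∧ q m = y' ∧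
      (∀ j < m, ∃ i, q j ∈ W i ∧ q (j + 1) ∈ W i) ∧
      (∑ j ∈ Finset.range m, dist (q j) (q (j + 1))) = dist y y') :
    ∀ x x' : X,
      (1 / K) * dist x x' ≤ dist (Φ x) (Φ x') ∧ dist (Φ x) (Φ x') ≤ K * dist x x' :=
  stmt_5_general V W K Φ hΦ hbl hchainX hchainY
end

section
/- Let S₁ ≤ S₂ ≤ S₃ ≤ S₄ and T₁ ≤ T₂ ≤ T₃ ≤ T₄ be negative rational numbers with S₁+S₂+S₃+S₄ = T₁+T₂+T₃+T₄, (S₁+S₂)/(S₃+S₄) = (T₁+T₂)/(T₃+T₄), S₁/S₂ = T₁/T₂, and S₃/S₄ = T₃/T₄. Then S_i = T_i for all i. -/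
/-! Two pairs with the same sum and the same ratio coincide, since `(a + b) / b = a / b + 1`
determines `b` once the sum is known. Applied first to the pairs of partial sums
`(S₁ + S₂, S₃ + S₄)` and then to `(S₁, S₂)` and `(S₃, S₄)`; negativity keeps every
denominator and sum away from zero. -/

theorem eq_and_eq_of_div_eq_div_of_add_eq {K : Type*} [Field K] {a b c d : K}
    (hb : b ≠ 0) (hd : d ≠ 0) (hab : a + b ≠ 0) (hdiv : a / b = c / d) (hadd : a + b = c + d) :
    a = c ∧ b = d := by
  have hsum_div : (a + b) * b⁻¹ = (a + b) * d⁻¹ := by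
    rw [← div_eq_mul_inv, ← div_eq_mul_inv, add_div, div_self hb, hdiv, hadd, add_div c,
      div_self hd]
  obtain rfl : b = d := inv_injective (mul_left_cancel₀ hab hsum_div)
  exact ⟨(div_left_inj' hb).mp hdiv, rfl⟩

theorem stmt_9_general (S₁ S₂ S₃ S₄ T₁ T₂ T₃ T₄ : ℚ)
    (hS12 : S₁ ≤ S₂) (hS23 : S₂ ≤ S₃) (hS34 : S₃ ≤ S₄) (hS : S₄ < 0)
    (hT23 : T₂ ≤ T₃) (hT34 : T₃ ≤ T₄) (hT : T₄ < 0)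
    (hsum : S₁ + S₂ + S₃ + S₄ = T₁ + T₂ + T₃ + T₄)
    (hratio : (S₁ + S₂) / (S₃ + S₄) = (T₁ + T₂) / (T₃ + T₄))
    (h12 : S₁ / S₂ = T₁ / T₂)
    (h34 : S₃ / S₄ = T₃ / T₄) :
    S₁ = T₁ ∧ S₂ = T₂ ∧ S₃ = T₃ ∧ S₄ = T₄ := by
  have hS₃ : S₃ < 0 := hS34.trans_lt hS
  have hS₂ : S₂ < 0 := hS23.trans_lt hS₃
  have hS₁ : S₁ < 0 := hS12.trans_lt hS₂
  have hT₃ : T₃ < 0 := hT34.trans_lt hT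
  have hT₂ : T₂ < 0 := hT23.trans_lt hT₃
  obtain ⟨h₁₂, h₃₄⟩ := eq_and_eq_of_div_eq_div_of_add_eq (add_neg hS₃ hS).ne
    (add_neg hT₃ hT).ne (by linarith) hratio (by linarith)
  obtain ⟨h₁, h₂⟩ := eq_and_eq_of_div_eq_div_of_add_eq hS₂.ne hT₂.ne
    (add_neg hS₁ hS₂).ne h12 h₁₂
  obtain ⟨h₃, h₄⟩ := eq_and_eq_of_div_eq_div_of_add_eq hS.ne hT.ne
    (add_neg hS₃ hS).ne h34 h₃₄
  exact ⟨h₁, h₂, h₃, h₄⟩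

/-- Arithmetic core of the converse of Theorem 3.8: sorted negative rationals with
equal total sum, equal ratio of partial sums, and matching topological-type ratios
must coincide. -/
theorem stmt_9 (S₁ S₂ S₃ S₄ T₁ T₂ T₃ T₄ : ℚ)
    (hS12 : S₁ ≤ S₂) (hS23 : S₂ ≤ S₃) (hS34 : S₃ ≤ S₄) (hS : S₄ < 0)
    (hT12 : T₁ ≤ T₂) (hT23 : T₂ ≤ T₃) (hT34 : T₃ ≤ T₄) (hT : T₄ < 0)
    (hsum : S₁ + S₂ + S₃ + S₄ = T₁ + T₂ + T₃ + T₄)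
    (hratio : (S₁ + S₂) / (S₃ + S₄) = (T₁ + T₂) / (T₃ + T₄))
    (h12 : S₁ / S₂ = T₁ / T₂)
    (h34 : S₃ / S₄ = T₃ / T₄) :
    S₁ = T₁ ∧ S₂ = T₂ ∧ S₃ = T₃ ∧ S₄ = T₄ :=
  stmt_9_general S₁ S₂ S₃ S₄ T₁ T₂ T₃ T₄ hS12 hS23 hS34 hS hT23 hT34 hT hsum hratio h12 h34
end
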